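/- arXiv:2006.00541 — 3 statements merged into one kernel-verified Lean document; each statement's English description precedes it below -/
import Mathlib

section
/- Let a ∈ ℚ, a > 0, a ≠ 1, with a = a₀^h and a₀ = a₁·a₂² as in the context, and let m ≥ 1. Assume that one of the following two conditions holds: (1) 3 ∣ h, 3 ∤ m, 3 ∣ a₁, a₁ ∣ 3m, 2 ∤ h, v₂(m) = 1, and 2 ∤ a₁; or (2) 3 ∣ h, 3 ∤ m, 3 ∣ a₁, a₁ ∣ 3m, v₂(h) < v₂(m), and v₂(m) ≠ 1. Then the set of primes p ∉ Supp⟨−1,a⟩ such that [𝔽_p^* : ⟨−1,a⟩_p] = m is finite. -/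
/- Common definitions: finitely generated multiplicative subgroups `Γ ⊆ ℚˣ`,
the quotients `Γ(n) = Γ·(ℚ*)ⁿ/(ℚ*)ⁿ`, the invariants `δ(γ)`, the group `tildeΓ(m)`,
the constants `A(Γ,m)` and `B_{Γ,k}`, and the density `ρ(Γ,m)`. -/

open scoped Classical

noncomputable section

/-- The subgroup `(ℚˣ)ⁿ` of `n`-th powers in `ℚˣ`. -/
def powSubgroup (n : ℕ) : Subgroup ℚˣ := (powMonoidHom n : ℚˣ →* ℚˣ).range

/-- `Γ(n)`: the image of `Γ` in `ℚˣ/(ℚˣ)ⁿ`. -/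
def GammaMod (Γ : Subgroup ℚˣ) (n : ℕ) : Subgroup (ℚˣ ⧸ powSubgroup n) :=
  Γ.map (QuotientGroup.mk' (powSubgroup n))

/-- The unit of `ℚˣ` determined by a nonzero integer (junk value `1` at `0`). -/
def intUnit (b : ℤ) : ℚˣ := if h : (b : ℚ) = 0 then 1 else Units.mk0 (b : ℚ) h

/-- The unit of `ℚˣ` determined by a nonzero natural number. -/
def natUnit (b : ℕ) : ℚˣ := intUnit b

/-- A class modulo `n`-th powers contains a positive rational (for even `n` this says
that the class consists of positive rationals). -/
def IsPosClass (n : ℕ) (c : ℚˣ ⧸ powSubgroup n) : Prop :=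
  ∃ x : ℚˣ, QuotientGroup.mk x = c ∧ 0 < (x : ℚ)

/-- `δ(γ)` for a class `γ` modulo `(ℚˣ)ⁿ` (`n = 2^α`): if `γ = ±γ₀^(n/2)·(ℚˣ)ⁿ` with
`γ₀ > 1` squarefree, this is the discriminant of `ℚ(√γ₀)`, namely `γ₀` if `γ₀ ≡ 1 mod 4`
and `4γ₀` otherwise; the trivial class gets the value `1`. -/
def deltaClass (n : ℕ) (c : ℚˣ ⧸ powSubgroup n) : ℕ :=
  if c = 1 then 1
  else if h : ∃ g : ℕ, Squarefree g ∧ 1 < g ∧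
      ((QuotientGroup.mk (natUnit g ^ (n / 2)) : ℚˣ ⧸ powSubgroup n) = c ∨
       (QuotientGroup.mk (-(natUnit g ^ (n / 2))) : ℚˣ ⧸ powSubgroup n) = c)
  then (if h.choose % 4 = 1 then h.choose else 4 * h.choose)
  else 1

/-- The set `tildeΓ(m) ⊆ Γ(m₂)[2]`, where `m₂ = 2^(v₂(m))`. -/
def tildeGamma (Γ : Subgroup ℚˣ) (m : ℕ) :
    Set (ℚˣ ⧸ powSubgroup (2 ^ padicValNat 2 m)) :=
  {c | c ∈ GammaMod Γ (2 ^ padicValNat 2 m) ∧ c ^ 2 = 1 ∧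
    (if IsPosClass (2 ^ padicValNat 2 m) c
     then padicValNat 2 (deltaClass (2 ^ padicValNat 2 m) c) ≤ padicValNat 2 m
     else padicValNat 2 (deltaClass (2 ^ padicValNat 2 m) c) = padicValNat 2 m + 1)}

/-- `B_{Γ,k}`. -/
def BGamma (Γ : Subgroup ℚˣ) (k : ℕ) : ℝ :=
  ∑ᶠ c ∈ tildeGamma Γ k,
    ∏ᶠ ℓ ∈ {ℓ : ℕ | ℓ.Prime ∧ ℓ ∣ deltaClass (2 ^ padicValNat 2 k) c ∧ ¬ ℓ ∣ k},
      (-1 : ℝ) / (((ℓ : ℝ) - 1) * (Nat.card (GammaMod Γ ℓ)) - 1)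

/-- `A(Γ,m)`. -/
def AGamma (Γ : Subgroup ℚˣ) (m : ℕ) : ℝ :=
  (1 / ((Nat.totient m : ℝ) * (Nat.card (GammaMod Γ m) : ℝ))) *
  (∏ᶠ ℓ ∈ {ℓ : ℕ | ℓ.Prime ∧ ℓ ≠ 2 ∧ ℓ ∣ m},
      (1 - (Nat.card (GammaMod Γ (ℓ ^ padicValNat ℓ m)) : ℝ) /
        ((ℓ : ℝ) * (Nat.card (GammaMod Γ (ℓ ^ (padicValNat ℓ m + 1))) : ℝ)))) *
  (∏' ℓ : {ℓ : ℕ // ℓ.Prime ∧ ℓ ≠ 2 ∧ ¬ ℓ ∣ m},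
      (1 - 1 / ((((ℓ : ℕ) : ℝ) - 1) * (Nat.card (GammaMod Γ ((ℓ : ℕ))) : ℝ))))

/-- The set `{ζ_d} ∪ Γ^{1/d}` inside `ℂ`, where `Γ^{1/d}` is the set of real `d`-th
roots of elements of `Γ`. -/
def kummerSet (Γ : Subgroup ℚˣ) (d : ℕ) : Set ℂ :=
  {Complex.exp (2 * Real.pi * Complex.I / d)} ∪
  {z : ℂ | ∃ x : ℝ, (x : ℂ) = z ∧ ∃ γ ∈ Γ, x ^ d = ((γ : ℚ) : ℝ)}

/-- The degree `[ℚ(ζ_d, Γ^{1/d}) : ℚ]`. -/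
def kummerDegree (Γ : Subgroup ℚˣ) (d : ℕ) : ℕ :=
  Module.finrank ℚ (IntermediateField.adjoin ℚ (kummerSet Γ d))

/-- `ρ(Γ,m) = ∑_{k ≥ 1} μ(k)/[ℚ(ζ_{mk},Γ^{1/mk}):ℚ]`. -/
def rhoGamma (Γ : Subgroup ℚˣ) (m : ℕ) : ℝ :=
  ∑' k : ℕ, if k = 0 then 0 else
    (ArithmeticFunction.moebius k : ℝ) / (kummerDegree Γ (m * k) : ℝ)

/-- `Γ` has rank `r ≥ 1`: it contains an element of infinite order. -/
def HasPositiveRank (Γ : Subgroup ℚˣ) : Prop :=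
  ∃ g ∈ Γ, ∀ n : ℕ, 0 < n → g ^ n ≠ 1

/-- The discriminant of the quadratic field `ℚ(√g)`: writing `g = d·t²` with `d` a
squarefree integer, it is `d` if `d ≡ 1 mod 4` and `4d` otherwise (in particular it is
`1` if `g` is a square of a rational; junk value `0` at `g = 0`). -/
def quadDisc (g : ℚ) : ℤ :=
  if h : ∃ d : ℤ, Squarefree d ∧ ∃ t : ℚ, g = (d : ℚ) * t ^ 2
  then (if h.choose % 4 = 1 then h.choose else 4 * h.choose)
  else 0

/-- The support of `Γ`: primes occurring with nonzero valuation in some element of `Γ`. -/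
def suppGamma (Γ : Subgroup ℚˣ) : Set ℕ :=
  {ℓ : ℕ | ℓ.Prime ∧ ∃ γ ∈ Γ, padicValRat ℓ (γ : ℚ) ≠ 0}

/-- The reduction `Γ_p` of `Γ` modulo a prime `p` (not in the support of `Γ`),
as a subgroup of `(ZMod p)ˣ = 𝔽_pˣ`. -/
def reductionGamma (Γ : Subgroup ℚˣ) (p : ℕ) : Subgroup (ZMod p)ˣ :=
  Subgroup.closure
    {x : (ZMod p)ˣ | ∃ γ ∈ Γ,
      (x : ZMod p) = ((γ : ℚ).num : ZMod p) * (((γ : ℚ).den : ZMod p))⁻¹}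

/-- The `m`-th cyclotomic field `K_m = ℚ(ζ_m)` inside `ℂ`. -/
def cycloField (m : ℕ) : IntermediateField ℚ ℂ :=
  IntermediateField.adjoin ℚ {Complex.exp (2 * Real.pi * Complex.I / m)}

/-- `tildeΓ_{m,d} = (Γ·(ℚ*)^d ∩ (K_m^*)^d)/(ℚ*)^d`, as a subset of `ℚˣ/(ℚˣ)^d`. -/
def tildeGammaMD (Γ : Subgroup ℚˣ) (m d : ℕ) : Set (ℚˣ ⧸ powSubgroup d) :=
  {c | ∃ x : ℚˣ, QuotientGroup.mk x = c ∧ (∃ γ ∈ Γ, ∃ y : ℚˣ, x = γ * y ^ d) ∧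
    ∃ z ∈ cycloField m, z ^ d = ((x : ℚ) : ℂ)}

/-- The Artin constant `A = ∏_ℓ (1 - 1/(ℓ² - ℓ))`. -/
def artinConst : ℝ :=
  ∏' ℓ : {ℓ : ℕ // ℓ.Prime}, (1 - 1 / (((ℓ : ℕ) : ℝ) ^ 2 - ((ℓ : ℕ) : ℝ)))

/-- The subgroup `⟨-1, a⟩` of `ℚˣ` generated by `-1` and a rational `a`. -/
def negOneAGroup (a : ℚ) : Subgroup ℚˣ :=
  Subgroup.closure {u : ℚˣ | (u : ℚ) = -1 ∨ (u : ℚ) = a}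

/-- `τ_{a,m}` (depending only on `h`, `m` and `a₁`). -/
def tau (h m a₁ : ℕ) : ℝ :=
  if padicValNat 2 m < padicValNat 2 h then 0
  else if padicValNat 2 h = padicValNat 2 m ∧ padicValNat 2 m = 0 ∧ 2 ∣ h * a₁ then 0
  else if (padicValNat 2 h = 0 ∧ padicValNat 2 m = 0 ∧ ¬ 2 ∣ h * a₁) ∨
      (padicValNat 2 h = padicValNat 2 m ∧ 0 < padicValNat 2 m) ∨
      (padicValNat 2 h < padicValNat 2 m ∧ padicValNat 2 m = 1 ∧ 2 ∣ h * a₁) then -1/3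
  else 1

end

/-! No prime `p` has `[𝔽_p^* : ⟨-1, a⟩_p] = m`. Modulo such a `p`, the group `⟨-1, a⟩_p` is
generated by `-1` and `x^h`, where `x = a₀ mod p`. Since it contains `-1`, its order is even, so
`2m ∣ p - 1` and `p ≡ 1 mod 4`. The order of `x` divides `|⟨-1, a⟩_p| · gcd(h, m)`, which divides
`(p - 1)/2` because `v₂(h) < v₂(m)`; so `x`, and with it `a₁`, is a square mod `p`. Since `3 ∣ h`,
the group lies in the subgroup of cubes, of index `gcd(p - 1, 3)`, so `3 ∤ m` forces `3 ∤ p - 1`,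
i.e. `p ≡ 2 mod 3`. Writing `a₁ = 3b`
with `b ∣ m`, quadratic reciprocity gives `(3/p) = -1` and `(b/p) = 1` (as `b` is odd or
`8 ∣ p - 1`), hence `(a₁/p) = -1`. -/

lemma Nat.gcd_dvd_div_two_of_padicValNat_lt {n m : ℕ} (hn : n ≠ 0)
    (hlt : padicValNat 2 n < padicValNat 2 m) : n.gcd m ∣ m / 2 := by
  obtain ⟨j, n', hodd, rfl⟩ := Nat.exists_eq_two_pow_mul_odd hn
  have hj : padicValNat 2 (2 ^ j * n') = j := by
    rw [padicValNat.mul (by positivity) hodd.pos.ne', padicValNat.prime_pow,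
      padicValNat.eq_zero_of_not_dvd hodd.not_two_dvd_nat, add_zero]
  obtain ⟨m', rfl⟩ : 2 ^ (j + 1) ∣ m := (pow_dvd_pow 2 (by omega)).trans pow_padicValNat_dvd
  rw [pow_succ, mul_assoc, Nat.mul_div_assoc _ (dvd_mul_right 2 m'),
    Nat.mul_div_cancel_left _ two_pos, Nat.gcd_mul_left,
    Nat.Coprime.gcd_mul_left_cancel_right m' hodd.coprime_two_right.symm]
  exact Nat.mul_dvd_mul_left _ (Nat.gcd_dvd_right _ _)

section Jacobi

variable {p : ℕ}

lemma jacobiSym_eq_one_of_odd_of_dvd_sub_one {n : ℕ} (hp : p % 4 = 1) (hn : Odd n)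
    (hnp : n ∣ p - 1) : jacobiSym n p = 1 := by
  rw [jacobiSym.quadratic_reciprocity_one_mod_four' hn hp]
  have : ((p : ℤ) % n) = ((1 : ℕ) : ℤ) % n := by
    exact_mod_cast ((Nat.modEq_iff_dvd' (by omega)).2 hnp).symm
  rw [jacobiSym.mod_left' this]
  simp

lemma jacobiSym_eq_one_of_dvd_sub_one {n : ℕ} (hp : p % 8 = 1) (hnp : n ∣ p - 1) :
    jacobiSym n p = 1 := by
  obtain rfl | hp1 := eq_or_ne p 1
  · exact jacobiSym.one_right n
  obtain ⟨k, n', hodd, rfl⟩ := Nat.exists_eq_two_pow_mul_odd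
    (ne_zero_of_dvd_ne_zero (show p - 1 ≠ 0 by omega) hnp)
  have h2 : jacobiSym 2 p = 1 := by
    rw [jacobiSym.at_two (Nat.odd_iff.2 (by omega)), ZMod.χ₈_nat_eq_if_mod_eight,
      if_neg (by omega), if_pos (by omega)]
  push_cast
  rw [jacobiSym.mul_left, jacobiSym.pow_left, h2, one_pow, one_mul,
    jacobiSym_eq_one_of_odd_of_dvd_sub_one (by omega) hodd (dvd_of_mul_left_dvd hnp)]

lemma jacobiSym_three_mul_eq_neg_one {b : ℕ} (hp4 : p % 4 = 1) (hp3 : p % 3 = 2)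
    (hb : b ∣ p - 1) (hbp : Odd b ∨ p % 8 = 1) : jacobiSym (3 * b) p = -1 := by
  have h3 : jacobiSym 3 p = -1 := by
    have := jacobiSym.quadratic_reciprocity_one_mod_four' (a := 3) (by decide) hp4
    push_cast at this
    rw [this, jacobiSym.mod_left' (b := 3) (a₂ := 2) (by omega), jacobiSym.at_two (by decide)]
    decide
  have hb1 : jacobiSym b p = 1 := hbp.elim (jacobiSym_eq_one_of_odd_of_dvd_sub_one hp4 · hb)
    (jacobiSym_eq_one_of_dvd_sub_one · hb)
  rw [jacobiSym.mul_left, h3, hb1, mul_one]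

end Jacobi

section GroupTheory

variable {G : Type*}

lemma Subgroup.orderOf_mul_index_dvd_natCard [Group G] {H : Subgroup G} {x : G} (hx : x ∈ H) :
    orderOf x * H.index ∣ Nat.card G :=
  H.card_mul_index ▸ mul_dvd_mul_right (H.orderOf_dvd_natCard hx) _

lemma Subgroup.orderOf_dvd_natCard_mul_gcd_index [Group G] {H : Subgroup G} {x : G} {n : ℕ}
    (hx : x ^ n ∈ H) : orderOf x ∣ Nat.card H * n.gcd H.index := by
  rw [← Nat.gcd_mul_left]
  refine Nat.dvd_gcd (orderOf_dvd_of_pow_eq_one ?_)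
    (H.card_mul_index ▸ _root_.orderOf_dvd_natCard x)
  rw [mul_comm, pow_mul]
  exact congrArg Subtype.val (pow_card_eq_one' (x := (⟨x ^ n, hx⟩ : H)))

lemma IsCyclic.gcd_natCard_dvd_index [CommGroup G] [IsCyclic G] [Finite G] {H : Subgroup G}
    {d : ℕ} (hH : H ≤ (powMonoidHom d).range) : (Nat.card G).gcd d ∣ H.index :=
  IsCyclic.index_powMonoidHom_range (G := G) d ▸ Subgroup.index_dvd_of_le hH

end GroupTheory

section Reduction

variable {p : ℕ} [hp : Fact p.Prime]

lemma not_dvd_num_and_not_dvd_den_of_padicValRat_eq_zero {q : ℚ} (hq : q ≠ 0)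
    (hv : padicValRat p q = 0) : ¬ (p : ℤ) ∣ q.num ∧ ¬ p ∣ q.den := by
  have hcop : ¬ ((p : ℤ) ∣ q.num ∧ p ∣ q.den) := fun ⟨hn, hd⟩ =>
    hp.out.ne_one (Nat.dvd_one.mp (q.reduced ▸ Nat.dvd_gcd (Int.ofNat_dvd_left.mp hn) hd))
  rw [padicValRat_def] at hv
  refine ⟨fun hn => ?_, fun hd => ?_⟩
  · have hd : ¬ p ∣ q.den := fun hd => hcop ⟨hn, hd⟩
    have : 1 ≤ padicValInt p q.num :=
      one_le_padicValNat_of_dvd (Int.natAbs_ne_zero.mpr (Rat.num_ne_zero.mpr hq))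
        (Int.ofNat_dvd_left.mp hn)
    rw [padicValNat.eq_zero_of_not_dvd hd] at hv
    omega
  · have hn : ¬ (p : ℤ) ∣ q.num := fun hn => hcop ⟨hn, hd⟩
    have : 1 ≤ padicValNat p q.den := one_le_padicValNat_of_dvd q.den_ne_zero hd
    rw [padicValInt.eq_zero_of_not_dvd hn] at hv
    omega

variable (p) in
def padicUnitSubgroup : Subgroup ℚˣ where
  carrier := {u | padicValRat p u = 0}
  mul_mem' {u v} hu hv := by
    simp_all [padicValRat.mul u.ne_zero v.ne_zero]
  one_mem' := by simp
  inv_mem' {u} hu := by simp_all [padicValRat.inv]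

lemma mem_padicUnitSubgroup {u : ℚˣ} : u ∈ padicUnitSubgroup p ↔ padicValRat p u = 0 :=
  Iff.rfl

lemma den_ne_zero_of_mem_padicUnitSubgroup {u : ℚˣ} (hu : u ∈ padicUnitSubgroup p) :
    (((u : ℚ).den : ℕ) : ZMod p) ≠ 0 := by
  rw [Ne, ZMod.natCast_eq_zero_iff]
  exact (not_dvd_num_and_not_dvd_den_of_padicValRat_eq_zero u.ne_zero hu).2

lemma ratCast_ne_zero_of_mem_padicUnitSubgroup {u : ℚˣ} (hu : u ∈ padicUnitSubgroup p) :
    ((u : ℚ) : ZMod p) ≠ 0 := by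
  rw [Rat.cast_def, div_ne_zero_iff, Ne, ZMod.intCast_zmod_eq_zero_iff_dvd]
  exact ⟨(not_dvd_num_and_not_dvd_den_of_padicValRat_eq_zero u.ne_zero hu).1,
    den_ne_zero_of_mem_padicUnitSubgroup hu⟩

variable (p) in
def padicUnitReduction : padicUnitSubgroup p →* (ZMod p)ˣ where
  toFun u := Units.mk0 _ (ratCast_ne_zero_of_mem_padicUnitSubgroup u.2)
  map_one' := by ext; simp
  map_mul' u v := by
    ext
    exact Rat.cast_mul_of_ne_zero (den_ne_zero_of_mem_padicUnitSubgroup u.2)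
      (den_ne_zero_of_mem_padicUnitSubgroup v.2)

@[simp]
lemma val_padicUnitReduction (u : padicUnitSubgroup p) :
    (padicUnitReduction p u : ZMod p) = ((u : ℚˣ) : ℚ) := rfl

lemma le_padicUnitSubgroup_of_notMem_suppGamma {Γ : Subgroup ℚˣ} (h : p ∉ suppGamma Γ) :
    Γ ≤ padicUnitSubgroup p := fun γ hγ => by
  by_contra hv
  exact h ⟨hp.out, γ, hγ, hv⟩

lemma padicUnitReduction_mem_reductionGamma {Γ : Subgroup ℚˣ} {γ : padicUnitSubgroup p}
    (hγ : (γ : ℚˣ) ∈ Γ) : padicUnitReduction p γ ∈ reductionGamma Γ p :=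
  Subgroup.subset_closure ⟨γ, hγ, by simp [Rat.cast_def, div_eq_mul_inv]⟩

lemma reductionGamma_closure_le {s : Set ℚˣ} (hs : Subgroup.closure s ≤ padicUnitSubgroup p)
    {K : Subgroup (ZMod p)ˣ}
    (hK : ∀ γ (hγ : γ ∈ s), padicUnitReduction p ⟨γ, hs (Subgroup.subset_closure hγ)⟩ ∈ K) :
    reductionGamma (Subgroup.closure s) p ≤ K := by
  refine (Subgroup.closure_le _).2 ?_
  rintro x ⟨γ, hγ, hx⟩
  obtain rfl : x = padicUnitReduction p ⟨γ, hs hγ⟩ :=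
    Units.ext (by simp [hx, Rat.cast_def, div_eq_mul_inv])
  clear hx
  rw [SetLike.mem_coe]
  induction hγ using Subgroup.closure_induction with
  | mem γ hγ => exact hK γ hγ
  | one => exact (map_one (padicUnitReduction p)).symm ▸ K.one_mem
  | mul x y hx hy ihx ihy =>
    change padicUnitReduction p (⟨x, hs hx⟩ * ⟨y, hs hy⟩) ∈ K
    rw [map_mul]
    exact K.mul_mem ihx ihy
  | inv x hx ihx =>
    change padicUnitReduction p ⟨x, hs hx⟩⁻¹ ∈ K
    rw [map_inv]
    exact K.inv_mem ihx

lemma reductionGamma_negOneAGroup {a : ℚ} (ha : a ≠ 0)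
    (hΓ : negOneAGroup a ≤ padicUnitSubgroup p) :
    reductionGamma (negOneAGroup a) p = Subgroup.closure
      {-1, padicUnitReduction p ⟨Units.mk0 a ha, hΓ (Subgroup.subset_closure (Or.inr rfl))⟩} := by
  have hneg : ∀ h, padicUnitReduction p ⟨-1, h⟩ = -1 := fun _ => Units.ext (by simp)
  refine le_antisymm (reductionGamma_closure_le hΓ ?_) ((Subgroup.closure_le _).2 ?_)
  · rintro γ (hγ | hγ)
    · obtain rfl : γ = -1 := Units.ext hγ
      exact hneg _ ▸ Subgroup.subset_closure (Set.mem_insert _ _)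
    · obtain rfl : γ = Units.mk0 a ha := Units.ext hγ
      exact Subgroup.subset_closure (Set.mem_insert_of_mem _ rfl)
  · rintro x (rfl | rfl)
    · exact hneg (hΓ (Subgroup.subset_closure (Or.inl (by simp)))) ▸
        padicUnitReduction_mem_reductionGamma (Subgroup.subset_closure (Or.inl (by simp)))
    · exact padicUnitReduction_mem_reductionGamma (Subgroup.subset_closure (Or.inr rfl))

lemma padicValRat_eq_zero_of_squarefree_mul_sq {n : ℕ} {r : ℚ} (hn : Squarefree n) (hr : r ≠ 0)
    (hv : padicValRat p (n * r ^ 2) = 0) : padicValNat p n = 0 ∧ padicValRat p r = 0 := by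
  have hn1 : padicValNat p n ≤ 1 := by
    simpa [Nat.factorization_def n hp.out] using hn.natFactorization_le_one p
  rw [padicValRat.mul (by exact_mod_cast hn.ne_zero) (pow_ne_zero 2 hr), padicValRat.pow r,
    padicValRat.of_nat] at hv
  omega

lemma exists_reductionGamma_negOneAGroup_eq_closure {a₀ a₂ : ℚ} {h a₁ : ℕ} (ha₀ : a₀ ≠ 0)
    (hh : h ≠ 0) (hsf : Squarefree a₁) (hdec : a₀ = a₁ * a₂ ^ 2)
    (hsupp : p ∉ suppGamma (negOneAGroup (a₀ ^ h))) :
    ∃ x z : (ZMod p)ˣ, reductionGamma (negOneAGroup (a₀ ^ h)) p = Subgroup.closure {-1, x ^ h} ∧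
      (x : ZMod p) = a₁ * z ^ 2 := by
  have hΓ := le_padicUnitSubgroup_of_notMem_suppGamma hsupp
  have ha : a₀ ^ h ≠ 0 := pow_ne_zero h ha₀
  have ha₁ : (a₁ : ℚ) ≠ 0 := by exact_mod_cast hsf.ne_zero
  have ha₂ : a₂ ≠ 0 := by
    rintro rfl
    exact ha₀ (by simpa using hdec)
  have hv₀ : padicValRat p a₀ = 0 := by
    have := hΓ (Subgroup.subset_closure (Or.inr rfl) : Units.mk0 _ ha ∈ negOneAGroup (a₀ ^ h))
    simpa [mem_padicUnitSubgroup, padicValRat.pow, hh] using this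
  obtain ⟨hv₁, hv₂⟩ := padicValRat_eq_zero_of_squarefree_mul_sq hsf ha₂ (hdec ▸ hv₀)
  have hv₁' : padicValRat p a₁ = 0 := by simpa using hv₁
  refine ⟨padicUnitReduction p ⟨Units.mk0 a₀ ha₀, hv₀⟩,
    padicUnitReduction p ⟨Units.mk0 a₂ ha₂, hv₂⟩, ?_, ?_⟩
  · rw [reductionGamma_negOneAGroup ha hΓ, ← map_pow]
    congr
    ext
    simp
  · have : (⟨Units.mk0 a₀ ha₀, hv₀⟩ : padicUnitSubgroup p) =
        ⟨Units.mk0 (a₁ : ℚ) ha₁, hv₁'⟩ * ⟨Units.mk0 a₂ ha₂, hv₂⟩ ^ 2 :=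
      Subtype.ext (Units.ext (by simp [hdec]))
    rw [this, map_mul, map_pow, Units.val_mul, Units.val_pow_eq_pow_val]
    simp

end Reduction

section UnitsZMod

variable {p : ℕ} [hp : Fact p.Prime]

lemma ZMod.natCard_units_eq_sub_one : Nat.card (ZMod p)ˣ = p - 1 := by
  rw [Nat.card_eq_fintype_card, ZMod.card_units]

lemma ZMod.index_dvd_sub_one (H : Subgroup (ZMod p)ˣ) : H.index ∣ p - 1 :=
  ZMod.natCard_units_eq_sub_one (p := p) ▸ H.index_dvd_card

lemma ZMod.two_mul_index_dvd_sub_one {H : Subgroup (ZMod p)ˣ} (hp2 : p ≠ 2) (h1 : -1 ∈ H) :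
    2 * H.index ∣ p - 1 := by
  have : orderOf (-1 : (ZMod p)ˣ) = 2 := by
    rw [← orderOf_units, Units.val_neg, Units.val_one, orderOf_neg_one, ZMod.ringChar_zmod_n,
      if_neg hp2]
  simpa only [this, ZMod.natCard_units_eq_sub_one] using H.orderOf_mul_index_dvd_natCard h1

lemma ZMod.exists_sq_eq_of_pow_mem {H : Subgroup (ZMod p)ˣ} {x : (ZMod p)ˣ} {n : ℕ}
    (hx : x ^ n ∈ H) (hn : n ≠ 0) (hlt : padicValNat 2 n < padicValNat 2 H.index) :
    ∃ y, y ^ 2 = x := by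
  rw [ZMod.euler_criterion_units]
  have hcard : Nat.card H * H.index = p - 1 := by
    rw [H.card_mul_index, ZMod.natCard_units_eq_sub_one]
  obtain ⟨k, hk⟩ : 2 ∣ H.index := dvd_of_one_le_padicValNat (by omega)
  have hhalf : p / 2 = Nat.card H * k := by
    rw [hk, mul_left_comm] at hcard
    have := hp.out.two_le
    omega
  have hdvd : n.gcd H.index ∣ k := by
    simpa [hk] using Nat.gcd_dvd_div_two_of_padicValNat_lt hn hlt
  rw [hhalf]
  exact orderOf_dvd_iff_pow_eq_one.1
    ((H.orderOf_dvd_natCard_mul_gcd_index hx).trans (mul_dvd_mul_left _ hdvd))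

lemma ZMod.not_three_dvd_sub_one {x : (ZMod p)ˣ} {n : ℕ} (hn : 3 ∣ n)
    (h3 : ¬ 3 ∣ (Subgroup.closure {-1, x ^ n}).index) : ¬ 3 ∣ p - 1 := by
  intro hp3
  refine h3 ?_
  have hcubes :
      Subgroup.closure {-1, x ^ n} ≤ (powMonoidHom 3 : (ZMod p)ˣ →* (ZMod p)ˣ).range := by
    obtain ⟨k, rfl⟩ := hn
    refine (Subgroup.closure_le _).2 ?_
    rintro _ (rfl | rfl)
    exacts [⟨-1, by norm_num⟩, ⟨x ^ k, by simp [← pow_mul, mul_comm]⟩]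
  simpa only [ZMod.natCard_units_eq_sub_one, Nat.gcd_eq_right hp3] using
    IsCyclic.gcd_natCard_dvd_index hcubes

lemma ZMod.not_isSquare_natCast_three_mul {b m : ℕ} (hp0 : ((3 * b : ℕ) : ZMod p) ≠ 0)
    (hbm : b ∣ m) (h2m : 2 ∣ m) (hmp : 2 * m ∣ p - 1) (hp3 : ¬ 3 ∣ p - 1)
    (hodd : Odd b ∨ 4 ∣ m) :
    ¬ IsSquare ((3 * b : ℕ) : ZMod p) := by
  have hp4 : p % 4 = 1 := by
    have := hp.out.two_le
    have := (mul_dvd_mul_left 2 h2m).trans hmp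
    omega
  have hp3' : p % 3 = 2 := by
    have hp_ne_three : p ≠ 3 := by
      rintro rfl
      exact hp0 ((ZMod.natCast_eq_zero_iff _ _).2 (dvd_mul_right 3 b))
    have : ¬ 3 ∣ p := fun h =>
      hp_ne_three ((Nat.prime_dvd_prime_iff_eq Nat.prime_three hp.out).1 h).symm
    omega
  have hb : b ∣ p - 1 := hbm.trans ((dvd_mul_left m 2).trans hmp)
  have hodd' : Odd b ∨ p % 8 = 1 := hodd.imp_right fun h4 => by
    have := (mul_dvd_mul_left 2 h4).trans hmp
    have := hp.out.two_le
    omega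
  rw [← legendreSym.eq_one_iff' p hp0, jacobiSym.legendreSym.to_jacobiSym]
  push_cast
  rw [jacobiSym_three_mul_eq_neg_one hp4 hp3' hb hodd']
  decide

lemma ZMod.index_closure_neg_one_pow_ne {x z : (ZMod p)ˣ} {h b m : ℕ}
    (hx : (x : ZMod p) = (3 * b : ℕ) * z ^ 2) (hh : h ≠ 0) (h3h : 3 ∣ h) (h3m : ¬ 3 ∣ m)
    (hbm : b ∣ m) (hlt : padicValNat 2 h < padicValNat 2 m) (hodd : Odd b ∨ 4 ∣ m) :
    (Subgroup.closure {-1, x ^ h}).index ≠ m := by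
  rintro rfl
  have hxh : x ^ h ∈ Subgroup.closure {-1, x ^ h} := Subgroup.subset_closure (by simp)
  have hneg : -1 ∈ Subgroup.closure {-1, x ^ h} := Subgroup.subset_closure (by simp)
  have h2m : 2 ∣ (Subgroup.closure {-1, x ^ h}).index := dvd_of_one_le_padicValNat (by omega)
  have hp2 : p ≠ 2 := by
    rintro rfl
    exact absurd (Nat.dvd_one.1 (h2m.trans (ZMod.index_dvd_sub_one _))) (by norm_num)
  obtain ⟨y, rfl⟩ := ZMod.exists_sq_eq_of_pow_mem hxh hh hlt
  have hsq : ((3 * b : ℕ) : ZMod p) = ((y * z⁻¹ : (ZMod p)ˣ) : ZMod p) ^ 2 := by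
    rw [Units.val_mul, mul_pow, ← Units.val_pow_eq_pow_val y, hx, Units.val_inv_eq_inv_val,
      mul_assoc, ← mul_pow, mul_inv_cancel₀ z.ne_zero, one_pow, mul_one]
  exact ZMod.not_isSquare_natCast_three_mul (hsq ▸ pow_ne_zero 2 (Units.ne_zero _)) hbm h2m
    (ZMod.two_mul_index_dvd_sub_one hp2 hneg) (ZMod.not_three_dvd_sub_one h3h h3m) hodd
    ⟨_, hsq.trans (sq _)⟩

end UnitsZMod

theorem finite_index_set_negOneA_general (a a₀ a₂ : ℚ) (h a₁ m : ℕ)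
    (ha₀pos : 0 < a₀)
    (hh : 1 ≤ h) (hah : a = a₀ ^ h)
    (ha₁sf : Squarefree a₁)
    (hdec : a₀ = (a₁ : ℚ) * a₂ ^ 2)
    (hcond :
      (3 ∣ h ∧ ¬ 3 ∣ m ∧ 3 ∣ a₁ ∧ a₁ ∣ 3 * m ∧
        ¬ 2 ∣ h ∧ padicValNat 2 m = 1 ∧ ¬ 2 ∣ a₁) ∨
      (3 ∣ h ∧ ¬ 3 ∣ m ∧ 3 ∣ a₁ ∧ a₁ ∣ 3 * m ∧
        padicValNat 2 h < padicValNat 2 m ∧ padicValNat 2 m ≠ 1)) :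
    {p : ℕ | p.Prime ∧ p ∉ suppGamma (negOneAGroup a) ∧
      (reductionGamma (negOneAGroup a) p).index = m}.Finite := by
  obtain ⟨b, rfl⟩ : 3 ∣ a₁ := hcond.elim (·.2.2.1) (·.2.2.1)
  obtain ⟨h3h, h3m, hbm, hlt, hodd⟩ : 3 ∣ h ∧ ¬ 3 ∣ m ∧ b ∣ m ∧
      padicValNat 2 h < padicValNat 2 m ∧ (Odd b ∨ 4 ∣ m) := by
    rcases hcond with ⟨h3h, h3m, -, hbm, h2h, hm1, h2b⟩ | ⟨h3h, h3m, -, hbm, hlt, hm1⟩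
    · refine ⟨h3h, h3m, (mul_dvd_mul_iff_left three_ne_zero).1 hbm, ?_,
        .inl (Nat.odd_mul.1 (Nat.odd_iff.2 (Nat.two_dvd_ne_zero.1 h2b))).2⟩
      rw [padicValNat.eq_zero_of_not_dvd h2h]
      omega
    · exact ⟨h3h, h3m, (mul_dvd_mul_iff_left three_ne_zero).1 hbm, hlt,
        .inr ((pow_dvd_pow 2 (by omega : 2 ≤ padicValNat 2 m)).trans pow_padicValNat_dvd)⟩
  refine Set.finite_empty.subset ?_
  rintro p ⟨hp, hsupp, hidx⟩
  have := Fact.mk hp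
  subst hah
  obtain ⟨x, z, hΓ, hx⟩ :=
    exists_reductionGamma_negOneAGroup_eq_closure ha₀pos.ne' (by omega) ha₁sf hdec hsupp
  exact ZMod.index_closure_neg_one_pow_ne hx (by omega) h3h h3m hbm hlt hodd (hΓ ▸ hidx)

/-- **Theorem (finiteness of `{p : [𝔽_p^* : ⟨−1,a⟩_p] = m}` in the vanishing cases).** -/
theorem finite_index_set_negOneA (a a₀ a₂ : ℚ) (h a₁ m : ℕ)
    (ha : 0 < a) (ha1 : a ≠ 1) (ha₀pos : 0 < a₀)
    (hnp : ∀ (b : ℚ) (k : ℕ), 2 ≤ k → a₀ ≠ b ^ k)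
    (hh : 1 ≤ h) (hah : a = a₀ ^ h)
    (ha₁sf : Squarefree a₁) (ha₁1 : 1 < a₁) (ha₂pos : 0 < a₂)
    (hdec : a₀ = (a₁ : ℚ) * a₂ ^ 2) (hm : 1 ≤ m)
    (hcond :
      (3 ∣ h ∧ ¬ 3 ∣ m ∧ 3 ∣ a₁ ∧ a₁ ∣ 3 * m ∧
        ¬ 2 ∣ h ∧ padicValNat 2 m = 1 ∧ ¬ 2 ∣ a₁) ∨
      (3 ∣ h ∧ ¬ 3 ∣ m ∧ 3 ∣ a₁ ∧ a₁ ∣ 3 * m ∧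
        padicValNat 2 h < padicValNat 2 m ∧ padicValNat 2 m ≠ 1)) :
    {p : ℕ | p.Prime ∧ p ∉ suppGamma (negOneAGroup a) ∧
      (reductionGamma (negOneAGroup a) p).index = m}.Finite :=
  finite_index_set_negOneA_general a a₀ a₂ h a₁ m ha₀pos hh hah ha₁sf hdec hcond
end

section
/- Let Γ ⊂ ℚ* be a finitely generated subgroup and let m ≥ 1 with v₂(m) = 1. Then |Γ(2)| = 2 and tildeΓ(2m) = Γ(4) hold if and only if the following three conditions hold: (1) Γ(2) = {(ℚ*)², −(ℚ*)²}; (2) every element of Γ(4) is of the form γ₀²·(ℚ*)⁴ or −4γ₀²·(ℚ*)⁴ with γ₀ an odd squarefree positive integer; (3) Γ(4) contains at least one element of the form −4γ₀²·(ℚ*)⁴ with γ₀ an odd squarefree positive integer. -/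
/- Common definitions: finitely generated multiplicative subgroups `Γ ⊆ ℚˣ`,
the quotients `Γ(n) = Γ·(ℚ*)ⁿ/(ℚ*)ⁿ`, the invariants `δ(γ)`, the group `tildeΓ(m)`,
the constants `A(Γ,m)` and `B_{Γ,k}`, and the density `ρ(Γ,m)`. -/

open scoped Classical

/-!
Since `v₂(2m) = 2`, everything happens modulo fourth powers. A class `c` with `c² = 1` is
`±g²·(ℚˣ)⁴` for a unique squarefree `g ≥ 1`, and `δ(c)` is the discriminant of `ℚ(√g)`, so
`v₂(δ(c))` is `3` when `g` is even and at most `2` otherwise. Hence `tildeΓ(2m) = Γ(4)` says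
exactly that positive classes of `Γ(4)` have `g` odd and negative ones have `g = 2γ₀` with
`γ₀` odd, which is condition (2). Under (2) every element of `Γ(2)` is `±1`, so `|Γ(2)| = 2`
is condition (1); then `Γ` contains a negative number, whose class in `Γ(4)` gives (3).
-/

open QuotientGroup

lemma mem_powSubgroup {n : ℕ} {x : ℚˣ} : x ∈ powSubgroup n ↔ ∃ y : ℚˣ, y ^ n = x := Iff.rfl

lemma mk_eq_mk_iff_exists_mul_pow {n : ℕ} {a b : ℚˣ} :
    (mk a : ℚˣ ⧸ powSubgroup n) = mk b ↔ ∃ y : ℚˣ, b = a * y ^ n := by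
  rw [QuotientGroup.eq, mem_powSubgroup]
  exact exists_congr fun y => by rw [eq_inv_mul_iff_mul_eq, eq_comm]

lemma mem_gammaMod_iff {Γ : Subgroup ℚˣ} {n : ℕ} {c : ℚˣ ⧸ powSubgroup n} :
    c ∈ GammaMod Γ n ↔ ∃ x ∈ Γ, (mk x : ℚˣ ⧸ powSubgroup n) = c :=
  Subgroup.mem_map

lemma natUnit_val {g : ℕ} (hg : g ≠ 0) : ((natUnit g : ℚˣ) : ℚ) = g := by
  simp [natUnit, intUnit, hg]

lemma natUnit_one : natUnit 1 = 1 :=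
  Units.ext ((natUnit_val one_ne_zero).trans Nat.cast_one)

lemma pos_iff_pos_of_mk_eq {n : ℕ} (hn : Even n) {a b : ℚˣ}
    (h : (mk a : ℚˣ ⧸ powSubgroup n) = mk b) : 0 < (a : ℚ) ↔ 0 < (b : ℚ) := by
  obtain ⟨y, rfl⟩ := mk_eq_mk_iff_exists_mul_pow.1 h
  rw [Units.val_mul, Units.val_pow_eq_pow_val,
    mul_pos_iff_of_pos_right (hn.pow_pos y.ne_zero)]

lemma isPosClass_mk_iff {n : ℕ} (hn : Even n) (x : ℚˣ) :
    IsPosClass n (mk x) ↔ 0 < (x : ℚ) :=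
  ⟨fun ⟨_, hy, hpos⟩ => (pos_iff_pos_of_mk_eq hn hy).1 hpos, fun hx => ⟨x, rfl, hx⟩⟩

lemma natUnit_sq_pos (g : ℕ) : 0 < ((natUnit g ^ 2 : ℚˣ) : ℚ) := by
  rw [Units.val_pow_eq_pow_val]
  exact pow_two_pos_of_ne_zero (natUnit g).ne_zero

lemma mk_neg_eq_mk_neg_iff {n : ℕ} {a b : ℚˣ} :
    (mk (-a) : ℚˣ ⧸ powSubgroup n) = mk (-b) ↔ (mk a : ℚˣ ⧸ powSubgroup n) = mk b := by
  rw [← neg_one_mul a, ← neg_one_mul b, QuotientGroup.mk_mul, QuotientGroup.mk_mul,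
    mul_right_inj]

lemma Nat.eq_of_squarefree_of_isSquare_mul {a b : ℕ} (ha : Squarefree a) (hb : Squarefree b)
    (h : IsSquare (a * b)) : a = b := by
  obtain ⟨r, hr⟩ := h
  have hr0 : r ≠ 0 := by
    rintro rfl
    exact mul_ne_zero ha.ne_zero hb.ne_zero hr
  refine Nat.eq_of_factorization_eq ha.ne_zero hb.ne_zero fun p => ?_
  have hp := congrArg (·.factorization p) hr
  simp only [Nat.factorization_mul ha.ne_zero hb.ne_zero, Nat.factorization_mul hr0 hr0,
    Finsupp.add_apply] at hp
  have := ha.natFactorization_le_one p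
  have := hb.natFactorization_le_one p
  omega

lemma eq_of_mk_natUnit_sq_eq {g g' : ℕ} (hg : Squarefree g) (hg' : Squarefree g')
    (h : (mk (natUnit g ^ 2) : ℚˣ ⧸ powSubgroup 4) = mk (natUnit g' ^ 2)) : g = g' := by
  obtain ⟨y, hy⟩ := mk_eq_mk_iff_exists_mul_pow.1 h
  have hval : (g' : ℚ) ^ 2 = ((g : ℚ) * (y : ℚ) ^ 2) ^ 2 := by
    have := congrArg Units.val hy
    simp only [Units.val_mul, Units.val_pow_eq_pow_val, natUnit_val hg.ne_zero,
      natUnit_val hg'.ne_zero] at this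
    rw [this]; ring
  have hg'y : (g' : ℚ) = g * (y : ℚ) ^ 2 :=
    (pow_left_inj₀ (by positivity) (by positivity) two_ne_zero).1 hval
  refine Nat.eq_of_squarefree_of_isSquare_mul hg hg' (Rat.isSquare_natCast_iff.1 ?_)
  exact ⟨g * (y : ℚ), by push_cast; rw [hg'y]; ring⟩

def IsSignedSqClass (g : ℕ) (c : ℚˣ ⧸ powSubgroup 4) : Prop :=
  mk (natUnit g ^ 2) = c ∨ mk (-(natUnit g ^ 2)) = c

lemma mk_natUnit_sq_ne_mk_neg (g g' : ℕ) :
    (mk (natUnit g ^ 2) : ℚˣ ⧸ powSubgroup 4) ≠ mk (-(natUnit g' ^ 2)) := by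
  intro h
  have := (pos_iff_pos_of_mk_eq (by decide) h).1 (natUnit_sq_pos g)
  rw [Units.val_neg] at this
  linarith [natUnit_sq_pos g']

lemma IsSignedSqClass.eq {g g' : ℕ} (hg : Squarefree g) (hg' : Squarefree g')
    {c : ℚˣ ⧸ powSubgroup 4} (h : IsSignedSqClass g c) (h' : IsSignedSqClass g' c) :
    g = g' := by
  rcases h with rfl | rfl <;> rcases h' with h' | h'
  · exact eq_of_mk_natUnit_sq_eq hg hg' h'.symm
  · exact absurd h'.symm (mk_natUnit_sq_ne_mk_neg g g')
  · exact absurd h' (mk_natUnit_sq_ne_mk_neg g' g)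
  · exact eq_of_mk_natUnit_sq_eq hg hg' (mk_neg_eq_mk_neg_iff.1 h'.symm)

lemma exists_squarefree_mk_sq_eq (y : ℚˣ) : ∃ g : ℕ, Squarefree g ∧
    (mk (y ^ 2) : ℚˣ ⧸ powSubgroup 4) = mk (natUnit g ^ 2) := by
  obtain ⟨g, b, hbg, hg⟩ := Nat.sq_mul_squarefree ((y : ℚ).num.natAbs * (y : ℚ).den)
  have hnum : (y : ℚ).num ≠ 0 := Rat.num_ne_zero.2 y.ne_zero
  have hb : b ≠ 0 := by rintro rfl; simp [hnum] at hbg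
  refine ⟨g, hg, mk_eq_mk_iff_exists_mul_pow.2
    ⟨Units.mk0 ((y : ℚ).den / b) (by positivity), Units.ext ?_⟩⟩
  have hcast : ((b : ℚ) ^ 2 * g) ^ 2 = ((y : ℚ).num * (y : ℚ).den) ^ 2 := by
    have : (((y : ℚ).num * (y : ℚ).den) ^ 2 : ℤ) = (((b ^ 2 * g : ℕ)) : ℤ) ^ 2 := by
      rw [hbg, ← Int.natAbs_sq, Int.natAbs_mul, Int.natAbs_natCast, Nat.cast_mul]
    exact_mod_cast this.symm
  have hy : (y : ℚ) * (y : ℚ).den = (y : ℚ).num := Rat.mul_den_eq_num _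
  simp only [Units.val_mul, Units.val_pow_eq_pow_val, Units.val_mk0,
    natUnit_val hg.ne_zero]
  rw [← hy] at hcast
  field_simp
  linear_combination hcast

lemma exists_isSignedSqClass_of_sq_eq_one {c : ℚˣ ⧸ powSubgroup 4} (hc : c ^ 2 = 1) :
    ∃ g : ℕ, Squarefree g ∧ IsSignedSqClass g c := by
  induction c using QuotientGroup.induction_on with | H x => ?_
  obtain ⟨y, hy⟩ := mem_powSubgroup.1 ((QuotientGroup.eq_one_iff _).1 hc)
  obtain ⟨g, hg, hyg⟩ := exists_squarefree_mk_sq_eq y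
  have hx : (x : ℚ) ^ 2 = ((y ^ 2 : ℚˣ) : ℚ) ^ 2 := by
    rw [← Units.val_pow_eq_pow_val, ← Units.val_pow_eq_pow_val, ← pow_mul, hy]
  refine ⟨g, hg, ?_⟩
  rcases sq_eq_sq_iff_eq_or_eq_neg.1 hx with h | h
  · exact .inl (hyg.symm.trans (congrArg mk (Units.ext h.symm)))
  · refine .inr ((mk_neg_eq_mk_neg_iff.2 hyg).symm.trans (congrArg mk (Units.ext ?_)))
    rw [h, Units.val_neg]

lemma isSignedSqClass_one_one : IsSignedSqClass 1 1 :=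
  .inl (by rw [natUnit_one, one_pow, QuotientGroup.mk_one])

/-- This holds for `g = 1` as well: the classes of `±1` get `δ = 1`, and `1 % 4 = 1`. -/
lemma deltaClass_four_eq {g : ℕ} (hg : Squarefree g) {c : ℚˣ ⧸ powSubgroup 4}
    (hc : IsSignedSqClass g c) : deltaClass 4 c = if g % 4 = 1 then g else 4 * g := by
  by_cases hc1 : c = 1
  · subst hc1
    rw [hc.eq hg squarefree_one isSignedSqClass_one_one, deltaClass, if_pos rfl]
    rfl
  rw [deltaClass, if_neg hc1]
  split
  next hex =>
    obtain ⟨hg', -, hcg'⟩ := hex.choose_spec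
    rw [IsSignedSqClass.eq hg' hg hcg' hc]
  next hex =>
    have hg1 : g = 1 := by
      by_contra hg1
      exact hex ⟨g, hg, by have := hg.ne_zero; omega, hc⟩
    subst hg1
    rfl

lemma padicValNat_two_disc_of_even {g : ℕ} (hg : Squarefree g) (h2 : 2 ∣ g) :
    padicValNat 2 (if g % 4 = 1 then g else 4 * g) = 3 := by
  have : Fact (Nat.Prime 2) := ⟨Nat.prime_two⟩
  rw [if_neg (by omega), padicValNat.mul (by norm_num) hg.ne_zero,
    show (4 : ℕ) = 2 ^ 2 from rfl, padicValNat.prime_pow, ← Nat.factorization_def _ Nat.prime_two,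
    Nat.factorization_eq_one_of_squarefree hg Nat.prime_two h2]

lemma padicValNat_two_disc_le_two_of_odd {g : ℕ} (hg : g ≠ 0) (h2 : ¬ 2 ∣ g) :
    padicValNat 2 (if g % 4 = 1 then g else 4 * g) ≤ 2 := by
  have : Fact (Nat.Prime 2) := ⟨Nat.prime_two⟩
  split_ifs
  · simp [padicValNat.eq_zero_of_not_dvd h2]
  · rw [padicValNat.mul (by norm_num) hg, show (4 : ℕ) = 2 ^ 2 from rfl,
      padicValNat.prime_pow, padicValNat.eq_zero_of_not_dvd h2]

lemma IsSignedSqClass.sq_eq_one {g : ℕ} {c : ℚˣ ⧸ powSubgroup 4} (hc : IsSignedSqClass g c) :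
    c ^ 2 = 1 := by
  rcases hc with rfl | rfl <;>
  · rw [← QuotientGroup.mk_pow, QuotientGroup.eq_one_iff, mem_powSubgroup]
    exact ⟨natUnit g, by simp only [neg_sq, ← pow_mul]⟩

lemma isPosClass_mk_natUnit_sq (g : ℕ) : IsPosClass 4 (mk (natUnit g ^ 2)) :=
  (isPosClass_mk_iff ⟨2, rfl⟩ _).2 (natUnit_sq_pos g)

lemma not_isPosClass_mk_neg_natUnit_sq (g : ℕ) : ¬ IsPosClass 4 (mk (-(natUnit g ^ 2))) := by
  rw [isPosClass_mk_iff ⟨2, rfl⟩, Units.val_neg, neg_pos, not_lt]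
  exact (natUnit_sq_pos g).le

lemma squarefree_two_mul_iff {γ₀ : ℕ} : Squarefree (2 * γ₀) ↔ Squarefree γ₀ ∧ ¬ 2 ∣ γ₀ := by
  rw [Nat.squarefree_mul_iff, Nat.Prime.coprime_iff_not_dvd Nat.prime_two]
  exact ⟨fun ⟨hodd, _, hγ₀⟩ => ⟨hγ₀, hodd⟩, fun ⟨hγ₀, hodd⟩ => ⟨hodd, Nat.squarefree_two, hγ₀⟩⟩

lemma tildeCondition_four_iff {c : ℚˣ ⧸ powSubgroup 4} :
    (c ^ 2 = 1 ∧ if IsPosClass 4 c then padicValNat 2 (deltaClass 4 c) ≤ 2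
      else padicValNat 2 (deltaClass 4 c) = 3) ↔
    ∃ γ₀ : ℕ, Squarefree γ₀ ∧ ¬ 2 ∣ γ₀ ∧
      (c = mk (natUnit γ₀ ^ 2) ∨ c = mk (-(natUnit (2 * γ₀) ^ 2))) := by
  constructor
  · rintro ⟨hsq, hδ⟩
    obtain ⟨g, hg, hc⟩ := exists_isSignedSqClass_of_sq_eq_one hsq
    rw [deltaClass_four_eq hg hc] at hδ
    rcases hc with rfl | rfl
    · rw [if_pos (isPosClass_mk_natUnit_sq g)] at hδ
      have hodd : ¬ 2 ∣ g := fun h2 => by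
        have := padicValNat_two_disc_of_even hg h2
        omega
      exact ⟨g, hg, hodd, .inl rfl⟩
    · rw [if_neg (not_isPosClass_mk_neg_natUnit_sq g)] at hδ
      obtain ⟨γ₀, rfl⟩ : 2 ∣ g := by
        by_contra hodd
        have := padicValNat_two_disc_le_two_of_odd hg.ne_zero hodd
        omega
      obtain ⟨hγ₀, hodd⟩ := squarefree_two_mul_iff.1 hg
      exact ⟨γ₀, hγ₀, hodd, .inr rfl⟩
  · rintro ⟨γ₀, hγ₀, hodd, rfl | rfl⟩
    · refine ⟨IsSignedSqClass.sq_eq_one (.inl rfl), ?_⟩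
      rw [if_pos (isPosClass_mk_natUnit_sq γ₀), deltaClass_four_eq hγ₀ (.inl rfl)]
      exact padicValNat_two_disc_le_two_of_odd hγ₀.ne_zero hodd
    · have hsf := squarefree_two_mul_iff.2 ⟨hγ₀, hodd⟩
      refine ⟨IsSignedSqClass.sq_eq_one (.inr rfl), ?_⟩
      rw [if_neg (not_isPosClass_mk_neg_natUnit_sq _), deltaClass_four_eq hsf (.inr rfl)]
      exact padicValNat_two_disc_of_even hsf (dvd_mul_right 2 γ₀)

lemma tildeGamma_eq_gammaMod_iff {Γ : Subgroup ℚˣ} {k : ℕ} (hk : padicValNat 2 k = 2) :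
    tildeGamma Γ k = (GammaMod Γ (2 ^ padicValNat 2 k) : Set _) ↔
    ∀ c ∈ GammaMod Γ 4, ∃ γ₀ : ℕ, Squarefree γ₀ ∧ ¬ 2 ∣ γ₀ ∧
      (c = mk (natUnit γ₀ ^ 2) ∨ c = mk (-(natUnit (2 * γ₀) ^ 2))) := by
  unfold tildeGamma
  generalize_proofs hnormal
  generalize padicValNat 2 k = v at hk hnormal ⊢
  subst hk
  simp only [Set.ext_iff, Set.mem_ofPred_eq, SetLike.mem_coe]
  exact forall_congr' fun c => ⟨fun h hc => tildeCondition_four_iff.1 (h.2 hc).2,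
    fun h => ⟨fun hc => hc.1, fun hc => ⟨hc, tildeCondition_four_iff.2 (h hc)⟩⟩⟩

lemma mk_eq_mk_of_dvd {d n : ℕ} (hd : d ∣ n) {a b : ℚˣ}
    (h : (mk a : ℚˣ ⧸ powSubgroup n) = mk b) : (mk a : ℚˣ ⧸ powSubgroup d) = mk b := by
  obtain ⟨y, rfl⟩ := mk_eq_mk_iff_exists_mul_pow.1 h
  obtain ⟨e, rfl⟩ := hd
  exact mk_eq_mk_iff_exists_mul_pow.2 ⟨y ^ e, by rw [← pow_mul, mul_comm e]⟩

lemma mk_neg_one_ne_one : (mk (-1) : ℚˣ ⧸ powSubgroup 2) ≠ 1 := by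
  rw [Ne, QuotientGroup.eq_one_iff, mem_powSubgroup]
  rintro ⟨y, hy⟩
  have := congrArg Units.val hy
  rw [Units.val_pow_eq_pow_val, Units.val_neg, Units.val_one] at this
  nlinarith [sq_nonneg (y : ℚ)]

lemma gammaMod_two_subset {Γ : Subgroup ℚˣ} (h : ∀ c ∈ GammaMod Γ 4, c ^ 2 = 1) :
    (GammaMod Γ 2 : Set (ℚˣ ⧸ powSubgroup 2)) ⊆ {1, mk (-1)} := by
  rintro _ hc
  obtain ⟨x, hx, rfl⟩ := mem_gammaMod_iff.1 hc
  obtain ⟨g, -, hg⟩ :=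
    exists_isSignedSqClass_of_sq_eq_one (h _ (mem_gammaMod_iff.2 ⟨x, hx, rfl⟩))
  rcases hg with hg | hg
  · refine .inl ((mk_eq_mk_of_dvd (by norm_num) hg).symm.trans ?_)
    rw [QuotientGroup.eq_one_iff, mem_powSubgroup]
    exact ⟨natUnit g, rfl⟩
  · refine .inr ((mk_eq_mk_of_dvd (by norm_num) hg).symm.trans ?_)
    rw [← neg_one_mul, QuotientGroup.mk_mul, mul_eq_left, QuotientGroup.eq_one_iff, mem_powSubgroup]
    exact ⟨natUnit g, rfl⟩

lemma natCard_gammaMod_two_eq_two_iff {Γ : Subgroup ℚˣ}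
    (hsub : (GammaMod Γ 2 : Set (ℚˣ ⧸ powSubgroup 2)) ⊆ {1, mk (-1)}) :
    Nat.card (GammaMod Γ 2) = 2 ↔ (GammaMod Γ 2 : Set (ℚˣ ⧸ powSubgroup 2)) = {1, mk (-1)} := by
  have hpair : ({1, mk (-1)} : Set (ℚˣ ⧸ powSubgroup 2)).ncard = 2 :=
    Set.ncard_pair mk_neg_one_ne_one.symm
  rw [← SetLike.coe_sort_coe, Nat.card_coe_set_eq]
  exact ⟨fun h => Set.eq_of_subset_of_ncard_le hsub (hpair.trans h.symm).le,
    fun h => h ▸ hpair⟩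

lemma exists_mk_neg_mem_of_neg_one_mem {Γ : Subgroup ℚˣ}
    (hform : ∀ c ∈ GammaMod Γ 4, ∃ γ₀ : ℕ, Squarefree γ₀ ∧ ¬ 2 ∣ γ₀ ∧
      (c = mk (natUnit γ₀ ^ 2) ∨ c = mk (-(natUnit (2 * γ₀) ^ 2))))
    (hneg : (mk (-1) : ℚˣ ⧸ powSubgroup 2) ∈ GammaMod Γ 2) :
    ∃ c ∈ GammaMod Γ 4, ∃ γ₀ : ℕ, Squarefree γ₀ ∧ ¬ 2 ∣ γ₀ ∧
      c = mk (-(natUnit (2 * γ₀) ^ 2)) := by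
  obtain ⟨x, hxΓ, hx⟩ := mem_gammaMod_iff.1 hneg
  have hxneg : ¬ 0 < (x : ℚ) := by
    rw [pos_iff_pos_of_mk_eq ⟨1, rfl⟩ hx, Units.val_neg, Units.val_one]
    norm_num
  have hx4 : (mk x : ℚˣ ⧸ powSubgroup 4) ∈ GammaMod Γ 4 := mem_gammaMod_iff.2 ⟨x, hxΓ, rfl⟩
  obtain ⟨γ₀, hγ₀, hodd, hpos | hneg⟩ := hform _ hx4
  · exact absurd ((pos_iff_pos_of_mk_eq ⟨2, rfl⟩ hpos).2 (natUnit_sq_pos γ₀)) hxneg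
  · exact ⟨_, hx4, γ₀, hγ₀, hodd, hneg⟩

theorem remark_two_exactly_divides_general (Γ : Subgroup ℚˣ)
    (m : ℕ) (hv : padicValNat 2 m = 1) :
    (Nat.card (GammaMod Γ 2) = 2 ∧
      tildeGamma Γ (2 * m) =
        (GammaMod Γ (2 ^ padicValNat 2 (2 * m)) :
          Set (ℚˣ ⧸ powSubgroup (2 ^ padicValNat 2 (2 * m))))) ↔
    ((GammaMod Γ 2 : Set (ℚˣ ⧸ powSubgroup 2)) = {1, QuotientGroup.mk (-1)} ∧
     (∀ c ∈ GammaMod Γ 4, ∃ γ₀ : ℕ, Squarefree γ₀ ∧ ¬ 2 ∣ γ₀ ∧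
        (c = QuotientGroup.mk (natUnit γ₀ ^ 2) ∨
         c = QuotientGroup.mk (-(natUnit (2 * γ₀) ^ 2)))) ∧
     (∃ c ∈ GammaMod Γ 4, ∃ γ₀ : ℕ, Squarefree γ₀ ∧ ¬ 2 ∣ γ₀ ∧
        c = QuotientGroup.mk (-(natUnit (2 * γ₀) ^ 2)))) := by
  have hm : m ≠ 0 := by rintro rfl; simp at hv
  have hv2 : padicValNat 2 (2 * m) = 2 := by
    rw [padicValNat.mul two_ne_zero hm, padicValNat_self, hv]
  rw [tildeGamma_eq_gammaMod_iff hv2]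
  constructor
  · rintro ⟨hcard, hform⟩
    have hsub := gammaMod_two_subset fun c hc => (tildeCondition_four_iff.2 (hform c hc)).1
    have hΓ2 := (natCard_gammaMod_two_eq_two_iff hsub).1 hcard
    have hneg : (mk (-1) : ℚˣ ⧸ powSubgroup 2) ∈ GammaMod Γ 2 := by
      rw [← SetLike.mem_coe, hΓ2]
      exact .inr rfl
    exact ⟨hΓ2, hform, exists_mk_neg_mem_of_neg_one_mem hform hneg⟩
  · rintro ⟨hΓ2, hform, -⟩
    exact ⟨(natCard_gammaMod_two_eq_two_iff hΓ2.le).2 hΓ2, hform⟩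

/-- **Remark after Theorem 5:** for `2‖m`, `|Γ(2)| = 2` and `tildeΓ(2m) = Γ(4)` hold
if and only if `Γ(2) = {(ℚ*)², −(ℚ*)²}`, all elements of `Γ(4)` have the form
`γ₀²(ℚ*)⁴` or `−4γ₀²(ℚ*)⁴` with `γ₀` odd squarefree, and at least one element has the
second form. -/
theorem remark_two_exactly_divides (Γ : Subgroup ℚˣ) (hFG : Γ.FG)
    (m : ℕ) (hm : 1 ≤ m) (hv : padicValNat 2 m = 1) :
    (Nat.card (GammaMod Γ 2) = 2 ∧
      tildeGamma Γ (2 * m) =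
        (GammaMod Γ (2 ^ padicValNat 2 (2 * m)) :
          Set (ℚˣ ⧸ powSubgroup (2 ^ padicValNat 2 (2 * m))))) ↔
    ((GammaMod Γ 2 : Set (ℚˣ ⧸ powSubgroup 2)) = {1, QuotientGroup.mk (-1)} ∧
     (∀ c ∈ GammaMod Γ 4, ∃ γ₀ : ℕ, Squarefree γ₀ ∧ ¬ 2 ∣ γ₀ ∧
        (c = QuotientGroup.mk (natUnit γ₀ ^ 2) ∨
         c = QuotientGroup.mk (-(natUnit (2 * γ₀) ^ 2)))) ∧
     (∃ c ∈ GammaMod Γ 4, ∃ γ₀ : ℕ, Squarefree γ₀ ∧ ¬ 2 ∣ γ₀ ∧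
        c = QuotientGroup.mk (-(natUnit (2 * γ₀) ^ 2)))) :=
  remark_two_exactly_divides_general Γ m hv
end

section
/- For every finitely generated subgroup Γ ⊂ ℚ* of rank r ≥ 1 and every integer m ≥ 1, one has A(Γ,m) ≠ 0; indeed A(Γ,m) > 0. -/
/- Common definitions: finitely generated multiplicative subgroups `Γ ⊆ ℚˣ`,
the quotients `Γ(n) = Γ·(ℚ*)ⁿ/(ℚ*)ⁿ`, the invariants `δ(γ)`, the group `tildeΓ(m)`,
the constants `A(Γ,m)` and `B_{Γ,k}`, and the density `ρ(Γ,m)`. -/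

open scoped Classical

/-! Each of the three factors of `A(Γ,m)` is positive. The Euler factors at odd `ℓ ∣ m` are so
since `Γ(ℓ^v)` is a quotient of `Γ(ℓ^(v+1))` and `ℓ > 1`. For the infinite product, fix `g ∈ Γ` of
infinite order: an `ℓ`-th power other than `±1` has numerator or denominator at least `2^ℓ`,
so for all large `ℓ` the image of `g` has order `ℓ` in `Γ(ℓ)`, whence `|Γ(ℓ)| ≥ ℓ`. The
terms `1/((ℓ-1)|Γ(ℓ)|)` are then `O(1/ℓ²)`, and `∏ (1 - aᵢ)` is positive whenever the
`aᵢ < 1` are summable. -/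

lemma Real.tprod_one_sub_pos {ι : Type*} {f : ι → ℝ} (hf : Summable f) (hf1 : ∀ i, f i < 1) :
    0 < ∏' i, (1 - f i) := by
  have hpos : ∀ i, 0 < 1 - f i := fun i ↦ sub_pos.mpr (hf1 i)
  have hlog : Summable fun i ↦ Real.log (1 - f i) := by
    simpa [sub_eq_add_neg] using Real.summable_log_one_add_of_summable hf.neg
  rw [← Real.rexp_tsum_eq_tprod hpos hlog]
  exact Real.exp_pos _

section PowSubgroup

variable {n : ℕ}

lemma powSubgroup_le_of_dvd {d : ℕ} (h : d ∣ n) : powSubgroup n ≤ powSubgroup d := by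
  obtain ⟨k, rfl⟩ := h
  rintro _ ⟨x, rfl⟩
  exact ⟨x ^ k, by simp [powMonoidHom, ← pow_mul, mul_comm]⟩

lemma quotient_powSubgroup_pow_eq_one (c : ℚˣ ⧸ powSubgroup n) : c ^ n = 1 := by
  induction c using QuotientGroup.induction_on with
  | H x => exact (QuotientGroup.eq_one_iff _).mpr ⟨x, rfl⟩

lemma lt_natAbs_num_add_den_of_mem_powSubgroup {g : ℚˣ} (hg : g ^ 2 ≠ 1)
    (h : g ∈ powSubgroup n) : n < (g : ℚ).num.natAbs + (g : ℚ).den := by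
  obtain ⟨x, rfl⟩ := h
  have hnum : ((x ^ n : ℚˣ) : ℚ).num.natAbs = (x : ℚ).num.natAbs ^ n := by
    simp [Rat.num_pow, Int.natAbs_pow]
  have hden : ((x ^ n : ℚˣ) : ℚ).den = (x : ℚ).den ^ n := by
    simp [Rat.den_pow]
  simp only [powMonoidHom_apply] at hg ⊢
  rw [hnum, hden]
  by_cases hx : (x : ℚ).num.natAbs = 1 ∧ (x : ℚ).den = 1
  · refine absurd ?_ hg
    have hx2 : x ^ 2 = 1 := Units.ext <| Rat.ext (by simp [Rat.num_pow, ← Int.natAbs_sq, hx.1])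
      (by simp [Rat.den_pow, hx.2])
    rw [← pow_mul, mul_comm, pow_mul, hx2, one_pow]
  · have hnum0 : (x : ℚ).num.natAbs ≠ 0 := by simp
    have hden0 : (x : ℚ).den ≠ 0 := Rat.den_ne_zero _
    have h2n := @Nat.lt_two_pow_self n
    rcases (by omega : 2 ≤ (x : ℚ).num.natAbs ∨ 2 ≤ (x : ℚ).den) with h | h
    all_goals have := Nat.pow_le_pow_left h n; omega

end PowSubgroup

section GammaMod

variable {Γ : Subgroup ℚˣ} {n : ℕ}

lemma finite_gammaMod (hFG : Γ.FG) (hn : 0 < n) : Finite (GammaMod Γ n) := by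
  have : Group.FG Γ := (Group.fg_iff_subgroup_fg Γ).mpr hFG
  have : Group.FG (GammaMod Γ n) := by
    rw [GammaMod, ← Subgroup.range_subtype Γ, ← MonoidHom.range_comp]
    infer_instance
  refine CommGroup.finite_of_fg_isMulTorsion _ fun c ↦ isOfFinOrder_iff_pow_eq_one.mpr
    ⟨n, hn, Subtype.ext ?_⟩
  simpa using quotient_powSubgroup_pow_eq_one (c : ℚˣ ⧸ powSubgroup n)

lemma card_gammaMod_pos (hFG : Γ.FG) (hn : 0 < n) : 0 < Nat.card (GammaMod Γ n) :=
  have := finite_gammaMod hFG hn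
  Nat.card_pos

lemma card_gammaMod_le_of_dvd (hFG : Γ.FG) (hn : 0 < n) {d : ℕ} (hdn : d ∣ n) :
    Nat.card (GammaMod Γ d) ≤ Nat.card (GammaMod Γ n) := by
  have := finite_gammaMod hFG hn
  let π := QuotientGroup.map (powSubgroup n) (powSubgroup d) (MonoidHom.id ℚˣ)
    (powSubgroup_le_of_dvd hdn)
  have hπ : (GammaMod Γ n).map π = GammaMod Γ d := by
    rw [GammaMod, GammaMod, Subgroup.map_map]
    rfl
  rw [← hπ]
  exact Nat.card_le_card_of_surjective _ (π.subgroupMap_surjective _)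

lemma prime_le_card_gammaMod (hFG : Γ.FG) {ℓ : ℕ} (hℓ : ℓ.Prime) {g : ℚˣ} (hgΓ : g ∈ Γ)
    (hgℓ : g ∉ powSubgroup ℓ) : ℓ ≤ Nat.card (GammaMod Γ ℓ) := by
  have : Fact ℓ.Prime := ⟨hℓ⟩
  have := finite_gammaMod hFG hℓ.pos
  let c : GammaMod Γ ℓ := ⟨QuotientGroup.mk g, g, hgΓ, rfl⟩
  have hc : orderOf c = ℓ := by
    refine orderOf_eq_prime (Subtype.ext ?_) fun h ↦ hgℓ ?_
    · simpa using quotient_powSubgroup_pow_eq_one (c : ℚˣ ⧸ powSubgroup ℓ)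
    · exact (QuotientGroup.eq_one_iff g).mp (congrArg Subtype.val h)
  exact hc.symm.trans_le (Nat.le_of_dvd Nat.card_pos (orderOf_dvd_natCard c))

lemma eventually_prime_le_card_gammaMod (hFG : Γ.FG) (hrank : HasPositiveRank Γ) :
    ∀ᶠ ℓ in Filter.atTop, ℓ.Prime → ℓ ≤ Nat.card (GammaMod Γ ℓ) := by
  obtain ⟨g, hgΓ, hg⟩ := hrank
  filter_upwards [Filter.eventually_ge_atTop ((g : ℚ).num.natAbs + (g : ℚ).den)] with ℓ hℓ hℓp
  refine prime_le_card_gammaMod hFG hℓp hgΓ fun hgℓ ↦ ?_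
  have := lt_natAbs_num_add_den_of_mem_powSubgroup (hg 2 two_pos) hgℓ
  omega

lemma summable_one_div_mul_card_gammaMod (hFG : Γ.FG) (hrank : HasPositiveRank Γ)
    {s : Set ℕ} (hs : ∀ ℓ ∈ s, ℓ.Prime) :
    Summable fun ℓ : s ↦ 1 / (((ℓ : ℕ) - 1 : ℝ) * Nat.card (GammaMod Γ ℓ)) := by
  have hbound : ∀ᶠ ℓ : ℕ in Filter.cofinite, ℓ.Prime → ℓ ≤ Nat.card (GammaMod Γ ℓ) :=
    Nat.cofinite_eq_atTop ▸ eventually_prime_le_card_gammaMod hFG hrank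
  refine ((Real.summable_one_div_nat_pow.mpr one_lt_two).mul_left 2).subtype s
    |>.of_norm_bounded_eventually ?_
  filter_upwards [Subtype.val_injective.tendsto_cofinite.eventually hbound] with ⟨ℓ, hℓs⟩ hℓ
  have h2 : (2 : ℝ) ≤ ℓ := by exact_mod_cast (hs ℓ hℓs).two_le
  have hcard : (ℓ : ℝ) ≤ Nat.card (GammaMod Γ ℓ) := by exact_mod_cast hℓ (hs ℓ hℓs)
  have hden : 0 < ((ℓ : ℝ) - 1) * Nat.card (GammaMod Γ ℓ) := mul_pos (by linarith) (by linarith)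
  dsimp only [Function.comp_apply]
  rw [Real.norm_of_nonneg (one_div_pos.mpr hden).le, mul_one_div,
    div_le_div_iff₀ hden (by positivity)]
  nlinarith

lemma one_sub_card_gammaMod_div_pos (hFG : Γ.FG) {ℓ : ℕ} (hℓ : ℓ.Prime) (v : ℕ) :
    0 < 1 - (Nat.card (GammaMod Γ (ℓ ^ v)) : ℝ) /
      (ℓ * Nat.card (GammaMod Γ (ℓ ^ (v + 1)))) := by
  have hle : (Nat.card (GammaMod Γ (ℓ ^ v)) : ℝ) ≤ Nat.card (GammaMod Γ (ℓ ^ (v + 1))) := by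
    exact_mod_cast card_gammaMod_le_of_dvd hFG (pow_pos hℓ.pos _) (pow_dvd_pow ℓ v.le_succ)
  have hcard : (0 : ℝ) < Nat.card (GammaMod Γ (ℓ ^ (v + 1))) := by
    exact_mod_cast card_gammaMod_pos hFG (pow_pos hℓ.pos _)
  have hℓ2 : (2 : ℝ) ≤ ℓ := by exact_mod_cast hℓ.two_le
  rw [sub_pos, div_lt_one (by positivity)]
  nlinarith

lemma tprod_one_sub_one_div_mul_card_gammaMod_pos (hFG : Γ.FG) (hrank : HasPositiveRank Γ)
    {s : Set ℕ} (hs : ∀ ℓ ∈ s, ℓ.Prime ∧ ℓ ≠ 2) :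
    0 < ∏' ℓ : s, (1 - 1 / (((ℓ : ℕ) - 1 : ℝ) * Nat.card (GammaMod Γ ℓ))) := by
  refine Real.tprod_one_sub_pos
    (summable_one_div_mul_card_gammaMod hFG hrank fun ℓ hℓ ↦ (hs ℓ hℓ).1) fun ⟨ℓ, hℓs⟩ ↦ ?_
  obtain ⟨hℓ, hℓ2⟩ := hs ℓ hℓs
  have hℓ3 : (3 : ℝ) ≤ ℓ := by exact_mod_cast (hℓ.two_le.lt_of_ne' hℓ2 : 2 < ℓ)
  have hcard : (1 : ℝ) ≤ Nat.card (GammaMod Γ ℓ) := by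
    exact_mod_cast card_gammaMod_pos hFG hℓ.pos
  rw [div_lt_one (by nlinarith)]
  nlinarith

end GammaMod

/-- **`A(Γ,m)` never vanishes; in fact it is positive.** -/
theorem AGamma_pos (Γ : Subgroup ℚˣ) (hFG : Γ.FG) (hrank : HasPositiveRank Γ)
    (m : ℕ) (hm : 1 ≤ m) :
    AGamma Γ m ≠ 0 ∧ 0 < AGamma Γ m := by
  have hnorm : 0 < 1 / ((Nat.totient m : ℝ) * Nat.card (GammaMod Γ m)) := by
    have := card_gammaMod_pos hFG hm
    have := Nat.totient_pos.mpr hm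
    positivity
  have hpos : 0 < AGamma Γ m := by
    refine mul_pos (mul_pos hnorm ?_) ?_
    · exact finprod_mem_induction (0 < ·) one_pos (fun _ _ ↦ mul_pos) fun ℓ hℓ ↦
        one_sub_card_gammaMod_div_pos hFG hℓ.1 _
    · exact tprod_one_sub_one_div_mul_card_gammaMod_pos hFG hrank
        (s := {ℓ : ℕ | ℓ.Prime ∧ ℓ ≠ 2 ∧ ¬ ℓ ∣ m}) fun ℓ hℓ ↦ ⟨hℓ.1, hℓ.2.1⟩
  exact ⟨hpos.ne', hpos⟩
end
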